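/- Characterization of 3-route all-pairs cuts (cactus characterization): a finite simple undirected graph G is a cactus — that is, every two distinct simple cycles of G share at most one vertex — if and only if there is no pair of distinct vertices u, v joined by three pairwise edge-disjoint u–v paths in G. Consequently, a set F of edges is feasible for the 3-route all-pairs cut problem (every pair of vertices has at most two pairwise edge-disjoint connecting paths in the remainder graph) exactly when (V, E\F) is a cactus. -/

import Mathlib

/-- A finite simple graph is a *cactus* if every two distinct simple cycles (i.e.
cycles with different edge sets) share at most one vertex. -/
def IsCactus {V : Type*} [DecidableEq V] (G : SimpleGraph V) : Prop :=
  ∀ (u v : V) (p : G.Walk u u) (q : G.Walk v v), p.IsCycle → q.IsCycle →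
    p.edges.toFinset ≠ q.edges.toFinset →
    (p.support.toFinset ∩ q.support.toFinset).card ≤ 1

/-!
Take three edge-disjoint `u`–`v` paths of minimal total length. If two of them met at a vertex
`w ∉ {u, v}`, cutting them at `w` would give three shorter edge-disjoint `u`–`w` paths; so they
meet only at `u` and `v`, and the first path closes up with each of the other two into two
distinct cycles through `u` and `v`.

Conversely, let distinct cycles `C` and `D` share `x ≠ y`, and let `e` be an edge of `D` not in
`C`. One of the two `x`–`y` arcs of `D` contains `e`, hence a subpath `R` joining two distinct
vertices of `C` and avoiding the edges of `C`; together with the two arcs of `C` between the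
ends of `R` it gives three edge-disjoint paths.
-/

namespace SimpleGraph

variable {V : Type*} {G : SimpleGraph V}

namespace Walk

theorem exists_append_cons_of_mem_edges {u v : V} {e : Sym2 V} :
    ∀ {p : G.Walk u v}, e ∈ p.edges → ∃ (x y : V) (h : G.Adj x y) (q : G.Walk u x)
      (r : G.Walk y v), e = s(x, y) ∧ p = q.append (cons h r)
  | cons h p, he => by
    rcases List.mem_cons.mp he with rfl | he
    · exact ⟨_, _, h, nil, p, rfl, rfl⟩
    · obtain ⟨x, y, h', q, r, rfl, rfl⟩ := exists_append_cons_of_mem_edges he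
      exact ⟨x, y, h', cons h q, r, rfl, rfl⟩

theorem IsPath.ne_of_mem_edges {u v : V} {p : G.Walk u v} (hp : p.IsPath) {e : Sym2 V}
    (he : e ∈ p.edges) : u ≠ v := by
  rintro rfl
  simp [(isPath_iff_nil.mp hp).eq_nil] at he

theorem IsPath.exists_isPath_avoiding_edgeSet (H : G.Subgraph) {a b : V} {w : G.Walk a b}
    (hw : w.IsPath) (ha : a ∈ H.verts) (hb : b ∈ H.verts) (hout : ∃ e ∈ w.edges, e ∉ H.edgeSet) :
    ∃ x y, x ∈ H.verts ∧ y ∈ H.verts ∧ x ≠ y ∧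
      ∃ R : G.Walk x y, R.IsPath ∧ ∀ e ∈ R.edges, e ∉ H.edgeSet := by
  induction hn : w.length using Nat.strong_induction_on generalizing a b w with
  | _ n ih =>
  obtain ⟨e₀, he₀w, he₀H⟩ := hout
  by_cases hclean : ∀ e ∈ w.edges, e ∉ H.edgeSet
  · exact ⟨a, b, ha, hb, hw.ne_of_mem_edges he₀w, w, hw, hclean⟩
  push Not at hclean
  obtain ⟨e, hew, heH⟩ := hclean
  obtain ⟨x, y, hxy, q, r, rfl, rfl⟩ := exists_append_cons_of_mem_edges hew
  have hlen : q.length + r.length + 1 = n := by simp [← hn]; omega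
  rw [edges_append, List.mem_append, edges_cons, List.mem_cons] at he₀w
  rcases he₀w with he₀q | rfl | he₀r
  · exact ih _ (by omega) hw.of_append_left ha (H.edge_vert heH) ⟨e₀, he₀q, he₀H⟩ rfl
  · exact absurd heH he₀H
  · exact ih _ (by omega) hw.of_append_right.of_cons (H.edge_vert (Sym2.eq_swap ▸ heH)) hb
      ⟨e₀, he₀r, he₀H⟩ rfl

theorem IsPath.isCycle_append_reverse {u v : V} {p q : G.Walk u v} (hp : p.IsPath)
    (hq : q.IsPath) (huv : u ≠ v) (hpq : p.edges.Disjoint q.edges)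
    (hint : ∀ w ∈ p.support, w ∈ q.support → w = u ∨ w = v) :
    (p.append q.reverse).IsCycle := by
  rw [isCycle_def, isTrail_append]
  refine ⟨⟨hp.isTrail, hq.reverse.isTrail, by simpa using hpq⟩, ?_, ?_⟩
  · intro h
    exact huv (nil_append_iff.mp (h ▸ Nil.nil : (p.append q.reverse).Nil)).1.eq
  · rw [tail_support_append, List.nodup_append']
    refine ⟨hp.support_nodup.tail, hq.reverse.support_nodup.tail, fun w hwp hwq => ?_⟩
    have hwu : w ≠ u := by
      rintro rfl
      exact (List.nodup_cons.mp (p.cons_tail_support ▸ hp.support_nodup)).1 hwp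
    have hwv : w ≠ v := by
      rintro rfl
      exact (List.nodup_cons.mp (q.reverse.cons_tail_support ▸ hq.reverse.support_nodup)).1 hwq
    have := hint w (List.mem_of_mem_tail hwp) (by simpa using List.mem_of_mem_tail hwq)
    tauto

end Walk

structure IsEdgeDisjointPathTriple {u v : V} (p q r : G.Walk u v) : Prop where
  isPath₁ : p.IsPath
  isPath₂ : q.IsPath
  isPath₃ : r.IsPath
  disjoint₁₂ : p.edges.Disjoint q.edges
  disjoint₁₃ : p.edges.Disjoint r.edges
  disjoint₂₃ : q.edges.Disjoint r.edges

theorem isEdgeDisjointPathTriple_iff {u v : V} {p q r : G.Walk u v} :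
    IsEdgeDisjointPathTriple p q r ↔ p.IsPath ∧ q.IsPath ∧ r.IsPath ∧
      p.edges.Disjoint q.edges ∧ p.edges.Disjoint r.edges ∧ q.edges.Disjoint r.edges :=
  ⟨fun ⟨h₁, h₂, h₃, h₁₂, h₁₃, h₂₃⟩ => ⟨h₁, h₂, h₃, h₁₂, h₁₃, h₂₃⟩,
    fun ⟨h₁, h₂, h₃, h₁₂, h₁₃, h₂₃⟩ => ⟨h₁, h₂, h₃, h₁₂, h₁₃, h₂₃⟩⟩

theorem IsEdgeDisjointPathTriple.swap₂₃ {u v : V} {p q r : G.Walk u v}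
    (h : IsEdgeDisjointPathTriple p q r) : IsEdgeDisjointPathTriple p r q :=
  ⟨h.isPath₁, h.isPath₃, h.isPath₂, h.disjoint₁₃, h.disjoint₁₂, h.disjoint₂₃.symm⟩

variable [DecidableEq V]

open Walk

theorem Walk.IsCycle.exists_edgeDisjoint_paths {a x y : V} {c : G.Walk a a} (hc : c.IsCycle)
    (hx : x ∈ c.support) (hy : y ∈ c.support) (hxy : x ≠ y) :
    ∃ P Q : G.Walk x y, P.IsPath ∧ Q.IsPath ∧ P.edges.Disjoint Q.edges ∧
      ∀ e, e ∈ c.edges ↔ e ∈ P.edges ∨ e ∈ Q.edges := by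
  obtain ⟨c, hc, hy, hedges⟩ : ∃ c' : G.Walk x x, c'.IsCycle ∧ y ∈ c'.support ∧
      ∀ e, e ∈ c'.edges ↔ e ∈ c.edges :=
    ⟨c.rotate x hx, hc.rotate hx, (c.mem_support_rotate_iff x hx).mpr hy,
      fun _ => (c.rotate_edges x hx).mem_iff⟩
  have hsplit := c.take_spec hy
  have hdrop : (c.dropUntil y hy).IsPath :=
    IsCycle.isPath_of_append_right (p := c.takeUntil y hy) (by simpa using hxy)
      (by rwa [hsplit])
  refine ⟨c.takeUntil y hy, (c.dropUntil y hy).reverse, hc.isPath_takeUntil hy,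
    hdrop.reverse, ?_, fun e => ?_⟩
  · simpa using hc.isTrail.disjoint_edges_takeUntil_dropUntil hy
  · rw [← hedges, edges_reverse, List.mem_reverse, ← List.mem_append, ← edges_append, hsplit]

/-- The third path is rerouted back along the part of the first one beyond `w`. -/
theorem IsEdgeDisjointPathTriple.exists_shorter {u v w : V} {p q r : G.Walk u v}
    (h : IsEdgeDisjointPathTriple p q r) (hwp : w ∈ p.support) (hwq : w ∈ q.support)
    (hwv : w ≠ v) :
    ∃ p' q' r' : G.Walk u w, IsEdgeDisjointPathTriple p' q' r' ∧
      p'.length + q'.length + r'.length < p.length + q.length + r.length := by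
  have hp := congrArg length (p.take_spec hwp)
  rw [length_append] at hp
  set r' := (r.append (p.dropUntil w hwp).reverse).bypass
  have hr : ∀ e ∈ r'.edges, e ∈ r.edges ∨ e ∈ (p.dropUntil w hwp).edges := fun e he => by
    simpa using (r.append (p.dropUntil w hwp).reverse).edges_bypass_subset_edges he
  have hrlen : r'.length ≤ r.length + (p.dropUntil w hwp).length := by
    simpa using (r.append (p.dropUntil w hwp).reverse).length_bypass_le_length
  refine ⟨p.takeUntil w hwp, q.takeUntil w hwq, r',
    ⟨h.isPath₁.takeUntil hwp, h.isPath₂.takeUntil hwq, bypass_isPath _, ?_, ?_, ?_⟩,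
    by have := length_takeUntil_lt_length hwq hwv; omega⟩
  · exact fun e hep heq => h.disjoint₁₂ (p.edges_takeUntil_subset_edges hwp hep)
      (q.edges_takeUntil_subset_edges hwq heq)
  · intro e hep her'
    rcases hr e her' with her | hep₂
    · exact h.disjoint₁₃ (p.edges_takeUntil_subset_edges hwp hep) her
    · exact h.isPath₁.isTrail.disjoint_edges_takeUntil_dropUntil hwp hep hep₂
  · intro e heq her'
    rcases hr e her' with her | hep₂
    · exact h.disjoint₂₃ (q.edges_takeUntil_subset_edges hwq heq) her
    · exact h.disjoint₁₂ (p.edges_dropUntil_subset_edges hwp hep₂)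
        (q.edges_takeUntil_subset_edges hwq heq)

end SimpleGraph

section

open SimpleGraph Walk

variable {V : Type*} [DecidableEq V] {G : SimpleGraph V}

theorem isCactus_iff_eq_of_mem_support :
    IsCactus G ↔ ∀ (a b : V) (p : G.Walk a a) (q : G.Walk b b), p.IsCycle → q.IsCycle →
      p.edges.toFinset ≠ q.edges.toFinset →
      ∀ x ∈ p.support, x ∈ q.support → ∀ y ∈ p.support, y ∈ q.support → x = y := by
  simp only [IsCactus, Finset.card_le_one, Finset.mem_inter, List.mem_toFinset, and_imp]

theorem IsCactus.not_isEdgeDisjointPathTriple (hG : IsCactus G) {u v : V} (huv : u ≠ v)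
    (p q r : G.Walk u v) : ¬ IsEdgeDisjointPathTriple p q r := by
  intro h
  induction hn : p.length + q.length + r.length using Nat.strong_induction_on
    generalizing v with
  | _ n ih =>
  by_cases hpq : ∃ w ∈ p.support, w ∈ q.support ∧ w ≠ u ∧ w ≠ v
  · obtain ⟨w, hwp, hwq, hwu, hwv⟩ := hpq
    obtain ⟨p', q', r', h', hlt⟩ := h.exists_shorter hwp hwq hwv
    exact ih _ (hn ▸ hlt) hwu.symm p' q' r' h' rfl
  by_cases hpr : ∃ w ∈ p.support, w ∈ r.support ∧ w ≠ u ∧ w ≠ v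
  · obtain ⟨w, hwp, hwr, hwu, hwv⟩ := hpr
    obtain ⟨p', r', q', h', hlt⟩ := h.swap₂₃.exists_shorter hwp hwr hwv
    exact ih _ (by omega) hwu.symm p' r' q' h' rfl
  push Not at hpq hpr
  have hcq := h.isPath₁.isCycle_append_reverse h.isPath₂ huv h.disjoint₁₂
    fun w hwp hwq => by tauto
  have hcr := h.isPath₁.isCycle_append_reverse h.isPath₃ huv h.disjoint₁₃
    fun w hwp hwr => by tauto
  obtain ⟨e, he⟩ := List.exists_mem_of_ne_nil q.edges (by simpa using not_nil_of_ne huv)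
  refine huv (isCactus_iff_eq_of_mem_support.mp hG u u _ _ hcq hcr (fun hqr => ?_)
    u (by simp) (by simp) v (by simp) (by simp))
  have := Finset.ext_iff.mp hqr e
  simp only [List.mem_toFinset, edges_append, edges_reverse, List.mem_append,
    List.mem_reverse, he, or_true, true_iff] at this
  exact this.elim (h.disjoint₁₂ · he) (h.disjoint₂₃ he)

theorem exists_isEdgeDisjointPathTriple_of_isCycle {a b x y : V} {p : G.Walk a a}
    {q : G.Walk b b} (hp : p.IsCycle) (hq : q.IsCycle) (hxp : x ∈ p.support)
    (hxq : x ∈ q.support) (hyp : y ∈ p.support) (hyq : y ∈ q.support) (hxy : x ≠ y)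
    {e : Sym2 V} (heq : e ∈ q.edges) (hep : e ∉ p.edges) :
    ∃ u v, u ≠ v ∧ ∃ P Q R : G.Walk u v, IsEdgeDisjointPathTriple P Q R := by
  obtain ⟨Q₁, Q₂, hQ₁, hQ₂, -, hQ⟩ := hq.exists_edgeDisjoint_paths hxq hyq hxy
  suffices ∀ W : G.Walk x y, W.IsPath → e ∈ W.edges →
      ∃ u v, u ≠ v ∧ ∃ P Q R : G.Walk u v, IsEdgeDisjointPathTriple P Q R from
    ((hQ e).mp heq).elim (this Q₁ hQ₁) (this Q₂ hQ₂)
  intro W hW he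
  obtain ⟨x', y', hx', hy', hxy', R, hR, hRp⟩ := hW.exists_isPath_avoiding_edgeSet
    p.toSubgraph (by simpa) (by simpa) ⟨e, he, by simpa⟩
  rw [mem_verts_toSubgraph] at hx' hy'
  simp only [edgeSet_toSubgraph, Walk.mem_edgeSet] at hRp
  obtain ⟨P₁, P₂, hP₁, hP₂, hP, hPp⟩ := hp.exists_edgeDisjoint_paths hx' hy' hxy'
  exact ⟨x', y', hxy', P₁, P₂, R, hP₁, hP₂, hR, hP,
    fun e h₁ h₂ => hRp e h₂ ((hPp e).mpr (.inl h₁)),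
    fun e h₁ h₂ => hRp e h₂ ((hPp e).mpr (.inr h₁))⟩

theorem isCactus_iff_forall_not_isEdgeDisjointPathTriple :
    IsCactus G ↔ ∀ u v, u ≠ v → ∀ p q r : G.Walk u v, ¬ IsEdgeDisjointPathTriple p q r := by
  refine ⟨fun hG u v huv => hG.not_isEdgeDisjointPathTriple huv, fun h => ?_⟩
  rw [isCactus_iff_eq_of_mem_support]
  intro a b p q hp hq hne x hxp hxq y hyp hyq
  by_contra hxy
  obtain ⟨e, he⟩ : ∃ e, ¬(e ∈ p.edges ↔ e ∈ q.edges) := by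
    simpa [Finset.ext_iff] using hne
  obtain ⟨u, v, huv, P, Q, R, hPQR⟩ : ∃ u v, u ≠ v ∧ ∃ P Q R : G.Walk u v,
      IsEdgeDisjointPathTriple P Q R := by
    by_cases hep : e ∈ p.edges
    · exact exists_isEdgeDisjointPathTriple_of_isCycle hq hp hxq hxp hyq hyp hxy hep (by tauto)
    · exact exists_isEdgeDisjointPathTriple_of_isCycle hp hq hxp hxq hyp hyq hxy (by tauto) hep
  exact h u v huv P Q R hPQR

end

theorem stmt_19_general {V : Type*} [DecidableEq V] (G : SimpleGraph V) :
    (IsCactus G ↔ ∀ (u v : V), u ≠ v →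
      ∀ (p₁ p₂ p₃ : G.Walk u v), p₁.IsPath → p₂.IsPath → p₃.IsPath →
        ¬ (Disjoint p₁.edges.toFinset p₂.edges.toFinset ∧
           Disjoint p₁.edges.toFinset p₃.edges.toFinset ∧
           Disjoint p₂.edges.toFinset p₃.edges.toFinset)) ∧
    (∀ F : Set (Sym2 V),
      (IsCactus (G.deleteEdges F) ↔ ∀ (u v : V), u ≠ v →
        ∀ (p₁ p₂ p₃ : (G.deleteEdges F).Walk u v),
          p₁.IsPath → p₂.IsPath → p₃.IsPath →
            ¬ (Disjoint p₁.edges.toFinset p₂.edges.toFinset ∧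
               Disjoint p₁.edges.toFinset p₃.edges.toFinset ∧
               Disjoint p₂.edges.toFinset p₃.edges.toFinset))) := by
  simp only [isCactus_iff_forall_not_isEdgeDisjointPathTriple,
    SimpleGraph.isEdgeDisjointPathTriple_iff, List.disjoint_toFinset_iff_disjoint, not_and,
    implies_true, and_self]

/-- Cactus characterization of 3-route all-pairs cuts: a finite
simple graph `G` is a cactus iff no pair of distinct vertices `u, v` is joined by
three pairwise edge-disjoint `u`–`v` paths.  Consequently an edge set `F` is feasible
for the 3-route all-pairs cut problem exactly when `(V, E \ F)` is a cactus. -/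
theorem stmt_19 {V : Type*} [Fintype V] [DecidableEq V] (G : SimpleGraph V) :
    (IsCactus G ↔ ∀ (u v : V), u ≠ v →
      ∀ (p₁ p₂ p₃ : G.Walk u v), p₁.IsPath → p₂.IsPath → p₃.IsPath →
        ¬ (Disjoint p₁.edges.toFinset p₂.edges.toFinset ∧
           Disjoint p₁.edges.toFinset p₃.edges.toFinset ∧
           Disjoint p₂.edges.toFinset p₃.edges.toFinset)) ∧
    (∀ F : Set (Sym2 V),
      (IsCactus (G.deleteEdges F) ↔ ∀ (u v : V), u ≠ v →
        ∀ (p₁ p₂ p₃ : (G.deleteEdges F).Walk u v),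
          p₁.IsPath → p₂.IsPath → p₃.IsPath →
            ¬ (Disjoint p₁.edges.toFinset p₂.edges.toFinset ∧
               Disjoint p₁.edges.toFinset p₃.edges.toFinset ∧
               Disjoint p₂.edges.toFinset p₃.edges.toFinset))) :=
  stmt_19_general G
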